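/- arXiv:1903.11890 — 12 statements merged into one kernel-verified Lean document; each statement's English description precedes it below -/
import Mathlib

section
/- A connected graph G is k-metric dimensional if and only if k equals the minimum over all pairs of distinct vertices x, y of the cardinality of the set of distinctive vertices D_G(x,y) = {z : d_G(x,z) ≠ d_G(y,z)}. -/
/-- Set of vertices distinguishing `u` and `v`. -/
noncomputable def distinguishers {V : Type*} (G : SimpleGraph V) (u v : V) : Set V :=
  {w | G.dist u w ≠ G.dist v w}

/-- `Dim(G)`: the largest `k` such that every pair of distinct vertices is
distinguished by at least `k` vertices. -/
noncomputable def metricDim {V : Type*} (G : SimpleGraph V) : ℕ :=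
  sSup {k | ∀ u v : V, u ≠ v → k ≤ (distinguishers G u v).ncard}

/-- The boundary `∂N(v,m)`: vertices at distance `m` from `v` having a
neighbor outside `N(v,m)`. -/
def bdry {V : Type*} (G : SimpleGraph V) (v : V) (m : ℕ) : Set V :=
  {w | G.dist v w = m ∧ ∃ x, G.Adj w x ∧ m < G.dist v x}

/-- `v` and `v'` are distinct and have equal (nonempty) `m`-boundary. -/
def eqBdry {V : Type*} (G : SimpleGraph V) (v v' : V) (m : ℕ) : Prop :=
  v ≠ v' ∧ bdry G v m = bdry G v' m ∧ (bdry G v m).Nonempty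

noncomputable def etaM {V : Type*} (G : SimpleGraph V) (v v' : V) (m : ℕ) : ℕ :=
  {w | (G.dist v w ≤ m ∨ G.dist v' w ≤ m) ∧ G.dist v w ≠ G.dist v' w}.ncard

noncomputable def etaG {V : Type*} (G : SimpleGraph V) : ℕ :=
  sInf {n | ∃ (m : ℕ) (v v' : V), eqBdry G v v' m ∧ n = etaM G v v' m}

/-- the diameter of `G`. -/
noncomputable def gdiam {V : Type*} (G : SimpleGraph V) : ℕ :=
  sSup {n | ∃ u v : V, G.dist u v = n}

/-- Reachability in `G` avoiding the vertex set `S`. -/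
def ReachOff {V : Type*} (G : SimpleGraph V) (S : Set V) (a b : V) : Prop :=
  ∃ p : G.Walk a b, ∀ x ∈ p.support, x ∉ S

/-- `S` is a common separating subset of the `m`-spheres of `v` and `v'`. -/
def CommonSepSubset {V : Type*} (G : SimpleGraph V) (v v' : V) (m : ℕ) (S : Set V) : Prop :=
  S ⊆ {w | G.dist v w = m} ∩ {w | G.dist v' w = m} ∧
  (∃ a b : V, a ∉ S ∧ b ∉ S ∧ ¬ ReachOff G S a b) ∧
  (∃ w : V, w ∉ S ∧ ¬ ReachOff G S w v ∧ ¬ ReachOff G S w v')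

/-- `(v,v') ∈ 𝒫ₘ(G)`. -/
def memPm {V : Type*} (G : SimpleGraph V) (v v' : V) (m : ℕ) : Prop :=
  v ≠ v' ∧ ∃ S : Set V, CommonSepSubset G v v' m S

/-- `Sₘ(v,v')`: the union of all common separating subsets of the `m`-spheres. -/
def SmUnion {V : Type*} (G : SimpleGraph V) (v v' : V) (m : ℕ) : Set V :=
  {x | ∃ S : Set V, CommonSepSubset G v v' m S ∧ x ∈ S}

/-- The union of the components of `G \ Sₘ(v,v')` containing neither `v` nor `v'`. -/
def avoidComps {V : Type*} (G : SimpleGraph V) (v v' : V) (m : ℕ) : Set V :=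
  {w | w ∉ SmUnion G v v' m ∧ ¬ ReachOff G (SmUnion G v v' m) w v ∧
    ¬ ReachOff G (SmUnion G v v' m) w v'}

noncomputable def muM {V : Type*} (G : SimpleGraph V) (v v' : V) (m : ℕ) : ℕ :=
  {w | w ∉ avoidComps G v v' m ∧ G.dist v w ≠ G.dist v' w}.ncard

noncomputable def muG {V : Type*} (G : SimpleGraph V) : ℕ :=
  sInf {n | ∃ (m : ℕ) (v v' : V), memPm G v v' m ∧ n = muM G v v' m}

/-- degree as the cardinality of the neighbor set. -/
noncomputable def ndeg {V : Type*} (G : SimpleGraph V) (v : V) : ℕ := (G.neighborSet v).ncard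

def IsMajor {V : Type*} (G : SimpleGraph V) (v : V) : Prop := 3 ≤ ndeg G v

/-- `u` is a terminal vertex of the major vertex `w`. -/
def IsTerminalOf {V : Type*} (G : SimpleGraph V) (u w : V) : Prop :=
  ndeg G u = 1 ∧ IsMajor G w ∧
    ∀ w', IsMajor G w' → w' ≠ w → G.dist u w < G.dist u w'

/-- `G` is a V-graph. -/
def IsVGraph {V : Type*} (G : SimpleGraph V) : Prop :=
  ∃ w, IsMajor G w ∧ {u | IsTerminalOf G u w}.ncard = 2 ∧
    ∀ u, IsTerminalOf G u w → G.Adj u w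

/-- `G` is a block graph: connected and every biconnected (2-connected)
set of vertices induces a clique. -/
def IsBlockGraph {V : Type*} (G : SimpleGraph V) : Prop :=
  G.Connected ∧ ∀ B : Set V, 3 ≤ B.ncard → (G.induce B).Connected →
    (∀ x ∈ B, (G.induce (B \ {x})).Connected) → G.IsClique B

/-- `G` is tagged. -/
def Tagged {V : Type*} (G : SimpleGraph V) : Prop :=
  ∃ K : Set V, G.IsClique K ∧ (∀ K' : Set V, K ⊆ K' → G.IsClique K' → K' = K) ∧
    3 ≤ K.ncard ∧ ∃ u ∈ K, ∃ v ∈ K, u ≠ v ∧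
      ndeg G u = K.ncard - 1 ∧ ndeg G v = K.ncard - 1

/-- `G` is neither a complete graph nor a path graph. -/
def NonElementary {V : Type*} (G : SimpleGraph V) : Prop :=
  G ≠ ⊤ ∧ ∀ n : ℕ, IsEmpty (G ≃g SimpleGraph.pathGraph n)

/-- `S` is a `k`-metric generator for `G`. -/
def IsKMetricGen {V : Type*} (G : SimpleGraph V) (S : Set V) (k : ℕ) : Prop :=
  ∀ u v : V, u ≠ v → k ≤ {w | w ∈ S ∧ G.dist u w ≠ G.dist v w}.ncard

/-- A connected graph `G` is `k`-metric dimensional iff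
`k = min_{x ≠ y} |𝒟_G(x,y)|`. -/
theorem stmt0 {V : Type*} [Fintype V] (G : SimpleGraph V) (hG : G.Connected)
    (hV : 1 < Fintype.card V) (k : ℕ) :
    IsGreatest {k | ∃ S : Set V, IsKMetricGen G S k} k ↔
      k = sInf {n | ∃ x y : V, x ≠ y ∧ n = (distinguishers G x y).ncard} := by
  obtain ⟨x0, y0, hxy0⟩ : ∃ x y : V, x ≠ y := Fintype.exists_pair_of_one_lt_card hV
  set T := {n | ∃ x y : V, x ≠ y ∧ n = (distinguishers G x y).ncard} with hT
  have hTne : T.Nonempty := ⟨_, x0, y0, hxy0, rfl⟩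
  obtain ⟨x, y, hxy, hEq⟩ := Nat.sInf_mem hTne
  have hgreat : IsGreatest {k | ∃ S : Set V, IsKMetricGen G S k} (sInf T) := by
    constructor
    · refine ⟨Set.univ, fun u v huv => ?_⟩
      have h : sInf T ≤ (distinguishers G u v).ncard := Nat.sInf_le ⟨u, v, huv, rfl⟩
      refine h.trans (le_of_eq ?_)
      congr 1
      ext w; simp [distinguishers]
    · rintro k' ⟨S, hS⟩
      calc k' ≤ {w | w ∈ S ∧ G.dist x w ≠ G.dist y w}.ncard := hS x y hxy
        _ ≤ (distinguishers G x y).ncard :=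
            Set.ncard_le_ncard (fun w hw => hw.2) (Set.toFinite _)
        _ = sInf T := hEq.symm
  constructor
  · exact fun h => h.unique hgreat
  · rintro rfl; exact hgreat
end

section
/- If two distinct vertices v, v' of a connected graph G have equal m-boundary (i.e., ∂N(v,m) = ∂N(v',m) ≠ ∅), then for every vertex w outside N(v,m) ∪ N(v',m), d(v,w) = d(v',w). -/
private lemma dist_getVert_le' {V : Type*} {G : SimpleGraph V} (hG : G.Connected)
    {u v : V} (p : G.Walk u v) : ∀ i : ℕ, G.dist u (p.getVert i) ≤ i := by
  induction p with
  | nil =>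
    intro i
    simp only [SimpleGraph.Walk.getVert, SimpleGraph.dist_self]
    exact Nat.zero_le i
  | @cons a b c h q ih =>
    intro i
    cases i with
    | zero => simp [SimpleGraph.Walk.getVert, SimpleGraph.dist_self]
    | succ n =>
      rw [SimpleGraph.Walk.getVert_cons_succ]
      have h1 : G.dist a b = 1 := SimpleGraph.dist_eq_one_iff_adj.2 h
      have h2 : G.dist a (q.getVert n) ≤ G.dist a b + G.dist b (q.getVert n) :=
        hG.dist_triangle
      have h3 := ih n
      omega

private lemma dist_getVert_right' {V : Type*} {G : SimpleGraph V} (hG : G.Connected)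
    {u v : V} (p : G.Walk u v) (i : ℕ) : G.dist (p.getVert i) v ≤ p.length - i := by
  by_cases hi : i ≤ p.length
  · have := dist_getVert_le' hG p.reverse (p.length - i)
    rw [SimpleGraph.Walk.getVert_reverse, Nat.sub_sub_self hi] at this
    rw [SimpleGraph.dist_comm]
    exact this
  · rw [SimpleGraph.Walk.getVert_of_length_le p (le_of_not_ge hi),
      SimpleGraph.dist_self]
    exact Nat.zero_le _

private lemma exists_bdry' {V : Type*} {G : SimpleGraph V} (hG : G.Connected)
    {v w : V} {m : ℕ} (hm : m < G.dist v w) :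
    ∃ x ∈ bdry G v m, G.dist v w = m + G.dist x w := by
  obtain ⟨p, hp⟩ := (hG v w).exists_walk_length_eq_dist
  have hvx : G.dist v (p.getVert m) ≤ m := dist_getVert_le' hG p m
  have hxw : G.dist (p.getVert m) w ≤ p.length - m := dist_getVert_right' hG p m
  have htri : G.dist v w ≤ G.dist v (p.getVert m) + G.dist (p.getVert m) w :=
    hG.dist_triangle
  have hvy : G.dist v (p.getVert (m + 1)) ≤ m + 1 := dist_getVert_le' hG p (m + 1)
  have hyw : G.dist (p.getVert (m + 1)) w ≤ p.length - (m + 1) :=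
    dist_getVert_right' hG p (m + 1)
  have htri2 : G.dist v w ≤ G.dist v (p.getVert (m + 1)) + G.dist (p.getVert (m + 1)) w :=
    hG.dist_triangle
  have hadj : G.Adj (p.getVert m) (p.getVert (m + 1)) := p.adj_getVert_succ (by omega)
  exact ⟨p.getVert m, ⟨by omega, p.getVert (m + 1), hadj, by omega⟩, by omega⟩

theorem stmt1 {V : Type*} [Fintype V] (G : SimpleGraph V) (hG : G.Connected)
    (v v' : V) (m : ℕ) (h : eqBdry G v v' m) :
    ∀ w : V, m < G.dist v w → m < G.dist v' w → G.dist v w = G.dist v' w := by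
  intro w hvw hv'w
  obtain ⟨hne, hbd, hbne⟩ := h
  obtain ⟨x, hxb, hxd⟩ := exists_bdry' hG hvw
  obtain ⟨x', hx'b, hx'd⟩ := exists_bdry' hG hv'w
  have hx'v : x' ∈ bdry G v m := hbd ▸ hx'b
  have hxv' : x ∈ bdry G v' m := hbd ▸ hxb
  have h1 : G.dist v' w ≤ m + G.dist x w := by
    calc G.dist v' w ≤ G.dist v' x + G.dist x w := hG.dist_triangle
      _ = m + G.dist x w := by rw [hxv'.1]
  have h2 : G.dist v w ≤ m + G.dist x' w := by
    calc G.dist v w ≤ G.dist v x' + G.dist x' w := hG.dist_triangle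
      _ = m + G.dist x' w := by rw [hx'v.1]
  omega
end

section
/- If G is a connected graph such that no pair of distinct vertices has equal m-boundary for any m ∈ ℕ, then Dim(G) ≥ ⌊(diam(G) − 2)/4⌋. -/
section auxstmt2

private lemma aux_dist_getVert_le {V : Type*} (G : SimpleGraph V) (hc : G.Connected)
    {x y : V} (p : G.Walk x y) (i : ℕ) : G.dist x (p.getVert i) ≤ i := by
  induction p generalizing i with
  | nil => rw [SimpleGraph.Walk.getVert_of_length_le _ (by simp)]; simp [SimpleGraph.dist_self]
  | @cons a b c h q ih =>
    cases i with
    | zero => simp [SimpleGraph.Walk.getVert_zero]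
    | succ n =>
      have h0 : (SimpleGraph.Walk.cons h q).getVert (n+1) = q.getVert n :=
        SimpleGraph.Walk.getVert_cons_succ q h
      rw [h0]
      have h1 : G.dist a (q.getVert n) ≤ G.dist a b + G.dist b (q.getVert n) :=
        hc.dist_triangle
      have h2 : G.dist a b = 1 := SimpleGraph.dist_eq_one_iff_adj.mpr h
      have h3 := ih n
      omega

private lemma aux_dist_getVert_le2 {V : Type*} (G : SimpleGraph V) (hc : G.Connected)
    {x y : V} (p : G.Walk x y) (i : ℕ) : G.dist (p.getVert i) y ≤ p.length - i := by
  induction p generalizing i with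
  | nil => rw [SimpleGraph.Walk.getVert_of_length_le _ (by simp)]; simp [SimpleGraph.dist_self]
  | @cons a b c h q ih =>
    cases i with
    | zero =>
      simp only [SimpleGraph.Walk.getVert_zero, SimpleGraph.Walk.length_cons, Nat.sub_zero]
      have h1 : G.dist a c ≤ G.dist a b + G.dist b c := hc.dist_triangle
      have h2 : G.dist a b = 1 := SimpleGraph.dist_eq_one_iff_adj.mpr h
      have h3 : G.dist b c ≤ q.length := SimpleGraph.dist_le q
      omega
    | succ n =>
      have h0 : (SimpleGraph.Walk.cons h q).getVert (n+1) = q.getVert n :=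
        SimpleGraph.Walk.getVert_cons_succ q h
      rw [h0]
      have h3 := ih n
      simp only [SimpleGraph.Walk.length_cons]
      omega

private lemma aux_getVert_spec {V : Type*} (G : SimpleGraph V) (hc : G.Connected) {x y : V}
    (p : G.Walk x y) (hp : p.length = G.dist x y) {i : ℕ} (hi : i ≤ p.length) :
    G.dist x (p.getVert i) = i ∧ G.dist (p.getVert i) y = p.length - i := by
  have h1 := aux_dist_getVert_le G hc p i
  have h2 := aux_dist_getVert_le2 G hc p i
  have h3 : G.dist x y ≤ G.dist x (p.getVert i) + G.dist (p.getVert i) y := hc.dist_triangle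
  omega

private lemma aux_ivt (f : ℕ → ℕ) : ∀ (n t : ℕ), (∀ i, i < n → f (i+1) ≤ f i + 1) →
    f 0 ≤ t → t ≤ f n → ∃ i, i ≤ n ∧ f i = t := by
  intro n
  induction n with
  | zero => intro t _ h0 hn; exact ⟨0, le_refl 0, by omega⟩
  | succ n ih =>
    intro t hstep h0 hn
    by_cases hc : t ≤ f n
    · obtain ⟨i, hi, hf⟩ := ih t (fun i hi => hstep i (by omega)) h0 hc
      exact ⟨i, by omega, hf⟩
    · exact ⟨n+1, le_refl _, by have := hstep n (by omega); omega⟩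

private lemma aux_count (C : Set ℕ) (hfin : C.Finite) (d s M : ℕ) (hd : 0 < d) (hds : d ≤ s)
    (hA : ∀ t, d/2 < t → t ≤ s → t ∈ C)
    (hB : ∀ m, s ≤ m → m < M → (m ∈ C ∨ (m+1) ∈ C)) :
    (M-1)/2 ≤ C.ncard := by
  have hbase : (s+1)/2 ≤ (C ∩ Set.Iic s).ncard := by
    have hsub : Set.Ioc (d/2) s ⊆ C ∩ Set.Iic s := fun t ht => ⟨hA t ht.1 ht.2, ht.2⟩
    have hcard : (Set.Ioc (d/2) s).ncard = s - d/2 := by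
      rw [← Finset.coe_Ioc, Set.ncard_coe_finset, Nat.card_Ioc]
    have hle := Set.ncard_le_ncard hsub (hfin.inter_of_left _)
    omega
  have hstep : ∀ k, s + 2*k ≤ M → (s+1)/2 + k ≤ (C ∩ Set.Iic (s + 2*k)).ncard := by
    intro k
    induction k with
    | zero => intro _; simpa using hbase
    | succ k ih =>
      intro hk
      have h1 := ih (by omega)
      obtain ⟨c, hcC, hclb, hcub⟩ : ∃ c, c ∈ C ∧ s + 2*k < c ∧ c ≤ s + 2*(k+1) := by
        rcases hB (s+2*k+1) (by omega) (by omega) with hc | hc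
        · exact ⟨_, hc, by omega, by omega⟩
        · exact ⟨_, hc, by omega, by omega⟩
      have hnot : c ∉ C ∩ Set.Iic (s + 2*k) := by
        rintro ⟨-, h2⟩
        simp only [Set.mem_Iic] at h2
        omega
      have hsub2 : insert c (C ∩ Set.Iic (s + 2*k)) ⊆ C ∩ Set.Iic (s + 2*(k+1)) := by
        rintro x (rfl | ⟨hx1, hx2⟩)
        · exact ⟨hcC, by simpa using hcub⟩
        · simp only [Set.mem_Iic] at hx2 ⊢
          exact ⟨hx1, Set.mem_Iic.mpr (by omega)⟩
      have h2 := Set.ncard_insert_of_notMem hnot (hfin.inter_of_left _)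
      have h3 := Set.ncard_le_ncard hsub2 (hfin.inter_of_left _)
      omega
  by_cases hsM : s ≤ M
  · have h1 := hstep ((M - s)/2) (by omega)
    have h2 := Set.ncard_le_ncard (Set.inter_subset_left (s := C) (t := Set.Iic (s + 2*((M-s)/2)))) hfin
    omega
  · have h1 := hbase
    have h2 := Set.ncard_le_ncard (Set.inter_subset_left (s := C) (t := Set.Iic s)) hfin
    omega

private lemma aux_level_side {V : Type*} (G : SimpleGraph V) (hc : G.Connected)
    (u v : V) (m : ℕ) (w : V) (hw : w ∈ bdry G u m) (hw' : w ∉ bdry G v m) :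
    (∃ x, G.dist u x ≠ G.dist v x ∧ max (G.dist u x) (G.dist v x) = m) ∨
    (∃ x, G.dist u x ≠ G.dist v x ∧ max (G.dist u x) (G.dist v x) = m + 1) ∨
    (∀ t, G.dist u v ≤ t → t ≤ m + 1 →
      ∃ x, G.dist u x ≠ G.dist v x ∧ max (G.dist u x) (G.dist v x) = t) := by
  obtain ⟨hwm, y, hadj, hy⟩ := hw
  rcases lt_trichotomy (G.dist v w) m with hlt | heq | hgt
  · refine Or.inl ⟨w, by omega, ?_⟩
    rw [hwm]; exact max_eq_left hlt.le
  · have hy1 : G.dist u y = m + 1 := by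
      have h1 : G.dist u y ≤ G.dist u w + G.dist w y := hc.dist_triangle
      have h2 : G.dist w y = 1 := SimpleGraph.dist_eq_one_iff_adj.mpr hadj
      omega
    have hvy : G.dist v y ≤ m := by
      simp only [bdry, Set.mem_setOf_eq, not_and, not_exists, not_lt] at hw'
      exact hw' heq y hadj
    refine Or.inr (Or.inl ⟨y, by omega, ?_⟩)
    rw [hy1]; exact max_eq_left (by omega)
  · refine Or.inr (Or.inr ?_)
    intro t ht1 ht2
    obtain ⟨p, hp⟩ := hc.exists_walk_length_eq_dist u w
    have hplen : p.length = m := by rw [hp, hwm]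
    have hstep : ∀ i, i < m → G.dist v (p.getVert (i+1)) ≤ G.dist v (p.getVert i) + 1 := by
      intro i hi
      have hadj2 := p.adj_getVert_succ (i := i) (by omega)
      have h1 : G.dist (p.getVert i) (p.getVert (i+1)) = 1 :=
        SimpleGraph.dist_eq_one_iff_adj.mpr hadj2
      have h2 : G.dist v (p.getVert (i+1)) ≤
          G.dist v (p.getVert i) + G.dist (p.getVert i) (p.getVert (i+1)) := hc.dist_triangle
      omega
    have hf0 : G.dist v (p.getVert 0) = G.dist u v := by
      rw [p.getVert_zero, SimpleGraph.dist_comm]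
    have hfm : G.dist v (p.getVert m) = G.dist v w := by
      rw [← hplen, p.getVert_length]
    obtain ⟨i, him, hfi⟩ := aux_ivt (fun i => G.dist v (p.getVert i)) m t hstep
      (by show G.dist v (p.getVert 0) ≤ t; rw [hf0]; exact ht1)
      (by show t ≤ G.dist v (p.getVert m); omega)
    have hfi' : G.dist v (p.getVert i) = t := hfi
    have hilen : i ≤ p.length := by omega
    have hspec := aux_getVert_spec G hc p hp hilen
    have htri : G.dist v w ≤ G.dist v (p.getVert i) + G.dist (p.getVert i) w := hc.dist_triangle
    have hd1 : G.dist u (p.getVert i) = i := hspec.1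
    have hd2 : G.dist (p.getVert i) w = p.length - i := hspec.2
    have hit : i < t := by omega
    refine ⟨p.getVert i, ?_, ?_⟩
    · rw [hspec.1, hfi']; omega
    · rw [hspec.1, hfi']; exact max_eq_right hit.le

private lemma aux_main {V : Type*} [Fintype V] (G : SimpleGraph V) (hG : G.Connected)
    (h : ∀ (m : ℕ) (v v' : V), ¬ eqBdry G v v' m) (u v : V) (huv : u ≠ v) :
    (gdiam G - 2) / 4 ≤ (distinguishers G u v).ncard := by
  classical
  have hd : 0 < G.dist u v := hG.pos_dist_of_ne huv
  have hrange : (Set.range (fun w => G.dist u w)).Nonempty := ⟨G.dist u v, v, rfl⟩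
  have hbdd : BddAbove (Set.range (fun w => G.dist u w)) := (Set.finite_range _).bddAbove
  set M := sSup (Set.range (fun w => G.dist u w)) with hM_def
  obtain ⟨z, hz0⟩ := Nat.sSup_mem hrange hbdd
  have hz : G.dist u z = M := hz0
  have hdM : G.dist u v ≤ M := le_csSup hbdd ⟨v, rfl⟩
  have hDiam : gdiam G ≤ 2 * M := by
    have hne2 : {n | ∃ p q : V, G.dist p q = n}.Nonempty :=
      ⟨0, u, u, by simp [SimpleGraph.dist_self]⟩
    apply csSup_le hne2
    rintro n ⟨p, q, rfl⟩
    have h1 : G.dist p q ≤ G.dist p u + G.dist u q := hG.dist_triangle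
    have h2 : G.dist p u ≤ M := by
      rw [SimpleGraph.dist_comm]; exact le_csSup hbdd ⟨p, rfl⟩
    have h3 : G.dist u q ≤ M := le_csSup hbdd ⟨q, rfl⟩
    omega
  set C : Set ℕ := (fun w => max (G.dist u w) (G.dist v w)) '' (distinguishers G u v)
    with hC_def
  have hCfin : C.Finite := (Set.toFinite _).image _
  have hCcard : C.ncard ≤ (distinguishers G u v).ncard := Set.ncard_image_le (Set.toFinite _)
  have hGeo : ∀ t, G.dist u v / 2 < t → t ≤ G.dist u v → t ∈ C := by
    intro t h1 h2
    obtain ⟨p, hp⟩ := hG.exists_walk_length_eq_dist u v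
    have hspec := aux_getVert_spec G hG p hp (i := G.dist u v - t) (by omega)
    have ha : G.dist u (p.getVert (G.dist u v - t)) = G.dist u v - t := hspec.1
    have hb : G.dist v (p.getVert (G.dist u v - t)) = t := by
      rw [SimpleGraph.dist_comm]
      have := hspec.2
      omega
    refine ⟨p.getVert (G.dist u v - t), ?_, ?_⟩
    · show G.dist u (p.getVert (G.dist u v - t)) ≠ G.dist v (p.getVert (G.dist u v - t))
      omega
    · show max (G.dist u (p.getVert (G.dist u v - t)))
        (G.dist v (p.getVert (G.dist u v - t))) = t
      rw [ha, hb]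
      exact max_eq_right (by omega)
  have hLev : ∀ m, m < M →
      ((m ∈ C ∨ (m+1) ∈ C) ∨ (∀ t, G.dist u v ≤ t → t ≤ m + 1 → t ∈ C)) := by
    intro m hm
    obtain ⟨p, hp⟩ := hG.exists_walk_length_eq_dist u z
    have hplen : p.length = M := by rw [hp, hz]
    have hs0 := aux_getVert_spec G hG p hp (i := m) (by omega)
    have hs1 := aux_getVert_spec G hG p hp (i := m+1) (by omega)
    have hadj := p.adj_getVert_succ (i := m) (by omega)
    have hw0b : p.getVert m ∈ bdry G u m :=
      ⟨hs0.1, p.getVert (m+1), hadj, by rw [hs1.1]; omega⟩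
    have hnebd : bdry G u m ≠ bdry G v m := by
      intro heq; exact h m u v ⟨huv, heq, ⟨p.getVert m, hw0b⟩⟩
    have hwit : ∃ w, (w ∈ bdry G u m ∧ w ∉ bdry G v m) ∨
        (w ∈ bdry G v m ∧ w ∉ bdry G u m) := by
      by_contra hno
      push_neg at hno
      exact hnebd (Set.ext fun x => ⟨fun hx => (hno x).1 hx, fun hx => (hno x).2 hx⟩)
    obtain ⟨w, hcase⟩ := hwit
    have hmemC : ∀ c : ℕ, (∃ x, G.dist u x ≠ G.dist v x ∧
        max (G.dist u x) (G.dist v x) = c) → c ∈ C := by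
      rintro c ⟨x, hx1, hx2⟩
      exact ⟨x, hx1, hx2⟩
    rcases hcase with ⟨hw1, hw2⟩ | ⟨hw1, hw2⟩
    · rcases aux_level_side G hG u v m w hw1 hw2 with h1 | h1 | h1
      · exact Or.inl (Or.inl (hmemC _ h1))
      · exact Or.inl (Or.inr (hmemC _ h1))
      · exact Or.inr (fun t ht1 ht2 => hmemC _ (h1 t ht1 ht2))
    · have hmemC' : ∀ c : ℕ, (∃ x, G.dist v x ≠ G.dist u x ∧
          max (G.dist v x) (G.dist u x) = c) → c ∈ C := by
        rintro c ⟨x, hx1, hx2⟩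
        exact hmemC c ⟨x, hx1.symm, by rw [max_comm]; exact hx2⟩
      rcases aux_level_side G hG v u m w hw1 hw2 with h1 | h1 | h1
      · exact Or.inl (Or.inl (hmemC' _ h1))
      · exact Or.inl (Or.inr (hmemC' _ h1))
      · refine Or.inr (fun t ht1 ht2 => hmemC' _ (h1 t ?_ ht2))
        rw [SimpleGraph.dist_comm]; exact ht1
  have hfinal : (M - 1) / 2 ≤ C.ncard := by
    by_cases hB : {m | m < M ∧ ¬(m ∈ C ∨ (m+1) ∈ C)}.Nonempty
    · have hBbdd : BddAbove {m | m < M ∧ ¬(m ∈ C ∨ (m+1) ∈ C)} :=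
        ((Set.finite_Iio M).subset (fun m hm => hm.1)).bddAbove
      have hm0 := Nat.sSup_mem hB hBbdd
      set m0 := sSup {m | m < M ∧ ¬(m ∈ C ∨ (m+1) ∈ C)} with hm0_def
      refine aux_count C hCfin (G.dist u v) (max (G.dist u v) (m0+1)) M hd
        (le_max_left _ _) ?_ ?_
      · intro t h1 h2
        by_cases h3 : t ≤ G.dist u v
        · exact hGeo t h1 h3
        · rcases le_max_iff.mp h2 with h4 | h4
          · omega
          · rcases hLev m0 hm0.1 with hg | hint
            · exact absurd hg hm0.2
            · exact hint t (by omega) h4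
      · intro m h1 h2
        by_contra hg
        have hmem : m ∈ {m | m < M ∧ ¬(m ∈ C ∨ (m+1) ∈ C)} := ⟨h2, hg⟩
        have h5 := le_csSup hBbdd hmem
        have h6 : m0 + 1 ≤ m := le_trans (le_max_right _ _) h1
        omega
    · refine aux_count C hCfin (G.dist u v) (G.dist u v) M hd le_rfl hGeo ?_
      intro m h1 h2
      by_contra hg
      exact hB ⟨m, h2, hg⟩
  omega


end auxstmt2

theorem stmt2 {V : Type*} [Fintype V] (G : SimpleGraph V) (hG : G.Connected)
    (h : ∀ (m : ℕ) (v v' : V), ¬ eqBdry G v v' m) :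
    (gdiam G - 2) / 4 ≤ metricDim G := by
  classical
  rcases subsingleton_or_nontrivial V with hs | hs
  · have hg0 : gdiam G = 0 := by
      apply Nat.le_zero.mp
      have hne : Nonempty V := hG.nonempty
      obtain ⟨a⟩ := hne
      have hne2 : {n | ∃ p q : V, G.dist p q = n}.Nonempty :=
        ⟨0, a, a, by simp [SimpleGraph.dist_self]⟩
      apply csSup_le hne2
      rintro n ⟨p, q, rfl⟩
      have hpq : p = q := Subsingleton.elim p q
      simp [hpq, SimpleGraph.dist_self]
    simp [hg0]
  · obtain ⟨a, b, hab⟩ := hs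
    have hmem : (gdiam G - 2) / 4 ∈
        {k | ∀ u v : V, u ≠ v → k ≤ (distinguishers G u v).ncard} :=
      fun u v huv => aux_main G hG h u v huv
    have hbdd : BddAbove {k | ∀ u v : V, u ≠ v → k ≤ (distinguishers G u v).ncard} :=
      ⟨(distinguishers G a b).ncard, fun k hk => hk a b hab⟩
    exact le_csSup hbdd hmem
end

section
/- If G is a connected graph with 𝒩_m(G) ≠ ∅ for some m, then Dim(G) ≤ η(G), where η(G) is the minimum over m and over pairs (v,v') with equal m-boundary of the number of vertices w in N(v,m) ∪ N(v',m) satisfying d(v,w) ≠ d(v',w). -/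
/-
A vertex `w` farther than `m` from `v` is reached from `v` by a geodesic that leaves `N(v,m)`
through a vertex `u ∈ ∂N(v,m)` with `d(v,w) = m + d(u,w)`. If `∂N(v,m) = ∂N(v',m)`, then also
`d(v',u) = m`, so `d(v',w) ≤ d(v,w)`; by symmetry a vertex farther than `m` from both does not
distinguish `v` and `v'`. Hence all distinguishers of `v, v'` lie in `N(v,m) ∪ N(v',m)`, and
`Dim(G)` is at most `η_m(v,v')` for a pair realising `η(G)`.
-/

namespace SimpleGraph

variable {V : Type*} {G : SimpleGraph V}

lemma exists_adj_dist_add_one_eq {u w : V} (h : 0 < G.dist u w) :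
    ∃ x, G.Adj u x ∧ G.dist x w + 1 = G.dist u w := by
  obtain ⟨p, hp⟩ := exists_walk_of_dist_ne_zero h.ne'
  cases p with
  | nil => simp at h
  | @cons _ x _ hux q =>
    have hq : q.length + 1 = G.dist u w := by simpa using hp
    have hxw : G.dist x w ≤ q.length := dist_le q
    have htri : G.dist u w ≤ G.dist u x + G.dist x w := hux.reachable.dist_triangle_left w
    rw [dist_eq_one_iff_adj.mpr hux] at htri
    exact ⟨x, hux, by omega⟩

lemma exists_adj_dist_succ_of_geodesic {v u w : V} {n : ℕ} (hvu : G.dist v u = n)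
    (huw : G.dist u w + n = G.dist v w) (hpos : 0 < G.dist u w) :
    ∃ x, G.Adj u x ∧ G.dist v x = n + 1 ∧ G.dist x w + (n + 1) = G.dist v w := by
  obtain ⟨x, hux, hxw⟩ := exists_adj_dist_add_one_eq hpos
  have hxw_reach : G.Reachable x w :=
    hux.symm.reachable.trans (Reachable.of_dist_ne_zero hpos.ne')
  have htri : G.dist v w ≤ G.dist v x + G.dist x w := hxw_reach.dist_triangle_right v
  have hvx : G.dist v x = n + 1 := by
    rcases hux.diff_dist_adj (u := v) with h | h | h <;> omega
  exact ⟨x, hux, hvx, by omega⟩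

lemma exists_dist_eq_of_le_dist {v w : V} {m : ℕ} (hm : m ≤ G.dist v w) :
    ∃ u, G.dist v u = m ∧ G.dist u w + m = G.dist v w := by
  induction m with
  | zero => exact ⟨v, dist_self, rfl⟩
  | succ n ih =>
    obtain ⟨u, hvu, huw⟩ := ih (by omega)
    obtain ⟨x, -, hvx, hxw⟩ := exists_adj_dist_succ_of_geodesic hvu huw (by omega)
    exact ⟨x, hvx, hxw⟩

end SimpleGraph

section

open SimpleGraph

variable {V : Type*} {G : SimpleGraph V}

lemma exists_mem_bdry_dist_add_eq {v w : V} {m : ℕ} (hm : m < G.dist v w) :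
    ∃ u ∈ bdry G v m, G.dist u w + m = G.dist v w := by
  obtain ⟨u, hvu, huw⟩ := exists_dist_eq_of_le_dist hm.le
  obtain ⟨x, hux, hvx, -⟩ := exists_adj_dist_succ_of_geodesic hvu huw (by omega)
  exact ⟨u, ⟨hvu, x, hux, by omega⟩, huw⟩

lemma reachable_of_mem_bdry {v u : V} {m : ℕ} (hu : u ∈ bdry G v m) : G.Reachable v u := by
  obtain ⟨-, x, hux, hvx⟩ := hu
  exact (Reachable.of_dist_ne_zero (by omega)).trans hux.symm.reachable

lemma dist_le_of_bdry_subset {v v' w : V} {m : ℕ} (hsub : bdry G v m ⊆ bdry G v' m)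
    (hm : m < G.dist v w) : G.dist v' w ≤ G.dist v w := by
  obtain ⟨u, hu, huw⟩ := exists_mem_bdry_dist_add_eq hm
  have hv'u : G.dist v' u = m := (hsub hu).1
  have := (reachable_of_mem_bdry (hsub hu)).dist_triangle_left w
  omega

lemma dist_eq_of_bdry_eq {v v' w : V} {m : ℕ} (h : bdry G v m = bdry G v' m)
    (hv : m < G.dist v w) (hv' : m < G.dist v' w) : G.dist v w = G.dist v' w :=
  le_antisymm (dist_le_of_bdry_subset h.ge hv') (dist_le_of_bdry_subset h.le hv)

lemma ncard_distinguishers_le_etaM [Finite V] {v v' : V} {m : ℕ}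
    (h : bdry G v m = bdry G v' m) : (distinguishers G v v').ncard ≤ etaM G v v' m := by
  refine Set.ncard_le_ncard (fun w hw => ⟨?_, hw⟩) (Set.toFinite _)
  by_contra! hfar
  exact hw (dist_eq_of_bdry_eq h hfar.1 hfar.2)

lemma metricDim_le_ncard_distinguishers {u v : V} (huv : u ≠ v) :
    metricDim G ≤ (distinguishers G u v).ncard :=
  csSup_le ⟨0, fun _ _ _ => Nat.zero_le _⟩ fun _ hk => hk u v huv

end

theorem stmt3_general {V : Type*} [Fintype V] (G : SimpleGraph V)
    (h : ∃ (m : ℕ) (v v' : V), eqBdry G v v' m) :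
    metricDim G ≤ etaG G := by
  obtain ⟨m₀, v₀, v₀', h₀⟩ := h
  obtain ⟨m, v, v', ⟨hne, hbdry, -⟩, hη⟩ :=
    Nat.sInf_mem (s := {n | ∃ (m : ℕ) (v v' : V), eqBdry G v v' m ∧ n = etaM G v v' m})
      ⟨_, m₀, v₀, v₀', h₀, rfl⟩
  calc metricDim G ≤ (distinguishers G v v').ncard := metricDim_le_ncard_distinguishers hne
    _ ≤ etaM G v v' m := ncard_distinguishers_le_etaM hbdry
    _ = etaG G := hη.symm

theorem stmt3 {V : Type*} [Fintype V] (G : SimpleGraph V) (hG : G.Connected)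
    (h : ∃ (m : ℕ) (v v' : V), eqBdry G v v' m) :
    metricDim G ≤ etaG G :=
  stmt3_general G h
end

section
/- If two vertices v, v' of a connected graph G have a common separating subset S in their m-spheres, then for every vertex w in any connected component of G \ S not containing v nor v', d(v,w) = d(v',w). -/
lemma key_sep {V : Type*} (G : SimpleGraph V) (hG : G.Connected)
    (t : V) (m : ℕ) (S : Set V) (hsub : S ⊆ {w | G.dist t w = m})
    (w : V) (hw : ¬ ReachOff G S w t)
    (s : V) (hs : s ∈ S) (hmin : ∀ b ∈ S, G.dist s w ≤ G.dist b w) :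
    G.dist t w = m + G.dist s w := by
  classical
  have hts : G.dist t s = m := hsub hs
  apply le_antisymm
  · calc G.dist t w ≤ G.dist t s + G.dist s w := hG.dist_triangle
    _ = m + G.dist s w := by rw [hts]
  · obtain ⟨p, hp⟩ := hG.exists_walk_length_eq_dist t w
    have : ∃ x ∈ p.support, x ∈ S := by
      by_contra h
      push_neg at h
      exact hw ⟨p.reverse, by simpa [SimpleGraph.Walk.support_reverse] using h⟩
    obtain ⟨x, hxp, hxS⟩ := this
    have hsplit := congr_arg SimpleGraph.Walk.length (p.take_spec hxp)
    rw [SimpleGraph.Walk.length_append] at hsplit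
    have h1 : G.dist t x ≤ (p.takeUntil x hxp).length := SimpleGraph.dist_le _
    have h2 : G.dist x w ≤ (p.dropUntil x hxp).length := SimpleGraph.dist_le _
    have hx : G.dist t x = m := hsub hxS
    have := hmin x hxS
    omega

theorem stmt5 {V : Type*} [Fintype V] (G : SimpleGraph V) (hG : G.Connected)
    (v v' : V) (m : ℕ) (S : Set V) (hS : CommonSepSubset G v v' m S) :
    ∀ w : V, w ∉ S → ¬ ReachOff G S w v → ¬ ReachOff G S w v' →
      G.dist v w = G.dist v' w := by
  intro w hw hwv hwv'
  obtain ⟨hsub, -, -⟩ := hS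
  have hne : S.Nonempty := by
    rcases Set.eq_empty_or_nonempty S with h | h
    · exact absurd ⟨(hG w v).some, by simp [h]⟩ hwv
    · exact h
  obtain ⟨s, hs, hmin⟩ := Set.exists_min_image S (fun s => G.dist s w) (Set.toFinite S) hne
  have h1 := key_sep G hG v m S (fun x hx => (hsub hx).1) w hwv s hs hmin
  have h2 := key_sep G hG v' m S (fun x hx => (hsub hx).2) w hwv' s hs hmin
  rw [h1, h2]
end

section
/- If S₁ and S₂ are both common separating subsets of the m-spheres of two vertices v, v' in a connected graph, then S₁ ∪ S₂ is also a common separating subset of their m-spheres. -/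
lemma reachOff_mono' {V : Type*} {G : SimpleGraph V} {S T : Set V} (h : S ⊆ T) {a b : V}
    (hr : ReachOff G T a b) : ReachOff G S a b := by
  obtain ⟨p, hp⟩ := hr
  exact ⟨p, fun x hx hxS => hp x hx (h hxS)⟩

lemma reachOff_cons {V : Type*} {G : SimpleGraph V} {S : Set V} {a b c : V}
    (hadj : G.Adj a b) (ha : a ∉ S) (hr : ReachOff G S b c) : ReachOff G S a c := by
  obtain ⟨p, hp⟩ := hr
  refine ⟨SimpleGraph.Walk.cons hadj p, fun x hx => ?_⟩
  rw [SimpleGraph.Walk.support_cons, List.mem_cons] at hx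
  rcases hx with hx | hx
  · subst hx; exact ha
  · exact hp x hx

theorem stmt6 {V : Type*} [Fintype V] (G : SimpleGraph V) (hG : G.Connected)
    (v v' : V) (m : ℕ) (S₁ S₂ : Set V)
    (h₁ : CommonSepSubset G v v' m S₁) (h₂ : CommonSepSubset G v v' m S₂) :
    CommonSepSubset G v v' m (S₁ ∪ S₂) := by
  obtain ⟨hsub₁, hsep₁, w₁, hw₁S, hw₁v, hw₁v'⟩ := h₁
  obtain ⟨hsub₂, hsep₂, w₂, hw₂S, hw₂v, hw₂v'⟩ := h₂
  have hS₁ne : S₁.Nonempty := by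
    by_contra h
    rw [Set.not_nonempty_iff_eq_empty] at h
    subst h
    exact hw₁v ⟨(hG w₁ v).some, fun x _ hx => hx⟩
  have hS₂ne : S₂.Nonempty := by
    by_contra h
    rw [Set.not_nonempty_iff_eq_empty] at h
    subst h
    exact hw₂v ⟨(hG w₂ v).some, fun x _ hx => hx⟩
  rcases Nat.eq_zero_or_pos m with hm | hm
  · -- m = 0 : S₁ = S₂ = {v}
    subst hm
    have hone : ∀ S : Set V, S ⊆ {w | G.dist v w = 0} ∩ {w | G.dist v' w = 0} → S.Nonempty →
        S = {v} := by
      rintro S hs ⟨x, hx⟩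
      apply Set.eq_singleton_iff_unique_mem.mpr
      have hxv : x = v := (hG.dist_eq_zero_iff.mp (hs hx).1).symm
      subst hxv
      refine ⟨hx, fun y hy => (hG.dist_eq_zero_iff.mp (hs hy).1).symm⟩
    have e1 : S₁ = {v} := hone S₁ hsub₁ hS₁ne
    have e2 : S₂ = {v} := hone S₂ hsub₂ hS₂ne
    have he : S₁ ∪ S₂ = S₁ := by rw [e1, e2, Set.union_self]
    rw [he]
    exact ⟨hsub₁, hsep₁, w₁, hw₁S, hw₁v, hw₁v'⟩
  · -- m ≥ 1
    have hvS : v ∉ S₁ ∪ S₂ := by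
      intro hv
      have hd : G.dist v v = m := by
        rcases hv with hv | hv
        · exact (hsub₁ hv).1
        · exact (hsub₂ hv).1
      rw [SimpleGraph.dist_self] at hd
      omega
    have key : ∃ w, w ∉ S₁ ∪ S₂ ∧ ¬ReachOff G S₁ w v ∧ ¬ReachOff G S₁ w v' := by
      by_cases hw₁2 : w₁ ∈ S₂
      · -- take a neighbor of w₁ closer to v
        have hd : G.dist w₁ v = m := by
          rw [SimpleGraph.dist_comm]; exact (hsub₂ hw₁2).1
        obtain ⟨p, hp⟩ := hG.exists_walk_length_eq_dist w₁ v
        have hplen : p.length = m := by rw [hp, hd]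
        cases p with
        | nil =>
          simp only [SimpleGraph.Walk.length_nil] at hplen; omega
        | cons hadj q =>
          rename_i x
          have hqlen : q.length = m - 1 := by
            simp only [SimpleGraph.Walk.length_cons] at hplen; omega
          have hdx : G.dist v x ≤ m - 1 := by
            rw [SimpleGraph.dist_comm, ← hqlen]; exact SimpleGraph.dist_le q
          have hdx' : G.dist v x ≠ m := by omega
          have hxS : x ∉ S₁ ∪ S₂ := by
            intro hx
            rcases hx with hx | hx
            · exact hdx' (hsub₁ hx).1
            · exact hdx' (hsub₂ hx).1
          refine ⟨x, hxS, fun hr => hw₁v (reachOff_cons hadj hw₁S hr),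
            fun hr => hw₁v' (reachOff_cons hadj hw₁S hr)⟩
      · exact ⟨w₁, by simp [hw₁S, hw₁2], hw₁v, hw₁v'⟩
    obtain ⟨w, hwS, hwv, hwv'⟩ := key
    have hwv2 : ¬ReachOff G (S₁ ∪ S₂) w v := fun h => hwv (reachOff_mono' Set.subset_union_left h)
    have hwv'2 : ¬ReachOff G (S₁ ∪ S₂) w v' :=
      fun h => hwv' (reachOff_mono' Set.subset_union_left h)
    refine ⟨?_, ⟨w, v, hwS, hvS, hwv2⟩, w, hwS, hwv2, hwv'2⟩
    rintro x (hx | hx)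
    · exact hsub₁ hx
    · exact hsub₂ hx
end

section
/- If G is a connected graph with 𝒫(G) ≠ ∅, then Dim(G) ≤ μ(G). -/
/-- Auxiliary: one-sided distance comparison. -/
lemma my_dist_le {V : Type*} (G : SimpleGraph V) (hG : G.Connected) (v v' w : V) (m : ℕ)
    (T : Set V) (hT : ∀ s ∈ T, G.dist v s = m ∧ G.dist v' s = m)
    (hw : ¬ ReachOff G T v w) : G.dist v' w ≤ G.dist v w := by
  classical
  obtain ⟨p, hp⟩ := (hG v w).exists_walk_length_eq_dist
  have : ∃ s ∈ p.support, s ∈ T := by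
    by_contra hcon
    push_neg at hcon
    exact hw ⟨p, hcon⟩
  obtain ⟨s, hs, hsT⟩ := this
  obtain ⟨hvs, hv's⟩ := hT s hsT
  have hsplit := p.take_spec hs
  have hlen : (p.takeUntil s hs).length + (p.dropUntil s hs).length = p.length := by
    rw [← SimpleGraph.Walk.length_append, hsplit]
  calc G.dist v' w ≤ G.dist v' s + G.dist s w := hG.dist_triangle
    _ ≤ G.dist v s + (p.dropUntil s hs).length := by
        rw [hv's, ← hvs]; exact Nat.add_le_add_left (SimpleGraph.dist_le _) _
    _ ≤ (p.takeUntil s hs).length + (p.dropUntil s hs).length := by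
        exact Nat.add_le_add_right (SimpleGraph.dist_le _) _
    _ = G.dist v w := by rw [hlen, hp]

lemma smUnion_dist {V : Type*} (G : SimpleGraph V) (v v' : V) (m : ℕ) :
    ∀ s ∈ SmUnion G v v' m, G.dist v s = m ∧ G.dist v' s = m := by
  rintro s ⟨S, hS, hsS⟩
  exact hS.1 hsS

lemma avoid_dist_eq {V : Type*} (G : SimpleGraph V) (hG : G.Connected) (v v' : V) (m : ℕ)
    (w : V) (hw : w ∈ avoidComps G v v' m) : G.dist v w = G.dist v' w := by
  obtain ⟨-, h1, h2⟩ := hw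
  have hT := smUnion_dist G v v' m
  have hT' : ∀ s ∈ SmUnion G v v' m, G.dist v' s = m ∧ G.dist v s = m :=
    fun s hs => (hT s hs).symm
  have h1' : ¬ ReachOff G (SmUnion G v v' m) v w := by
    rintro ⟨p, hp⟩
    exact h1 ⟨p.reverse, fun x hx => hp x (by simpa using hx)⟩
  have h2' : ¬ ReachOff G (SmUnion G v v' m) v' w := by
    rintro ⟨p, hp⟩
    exact h2 ⟨p.reverse, fun x hx => hp x (by simpa using hx)⟩
  exact le_antisymm (my_dist_le G hG v' v w m _ hT' h2') (my_dist_le G hG v v' w m _ hT h1')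

theorem stmt7 {V : Type*} [Fintype V] (G : SimpleGraph V) (hG : G.Connected)
    (h : ∃ (m : ℕ) (v v' : V), memPm G v v' m) :
    metricDim G ≤ muG G := by
  have hne : {n | ∃ (m : ℕ) (v v' : V), memPm G v v' m ∧ n = muM G v v' m}.Nonempty := by
    obtain ⟨m, v, v', hP⟩ := h
    exact ⟨muM G v v' m, m, v, v', hP, rfl⟩
  obtain ⟨m, v, v', hP, heq⟩ := Nat.sInf_mem hne
  show metricDim G ≤ sInf _
  rw [heq]
  have hsub : distinguishers G v v' ⊆
      {w | w ∉ avoidComps G v v' m ∧ G.dist v w ≠ G.dist v' w} := by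
    intro w hw
    refine ⟨fun hav => hw (avoid_dist_eq G hG v v' m w hav), hw⟩
  have hle : (distinguishers G v v').ncard ≤ muM G v v' m :=
    Set.ncard_le_ncard hsub (Set.toFinite _)
  apply csSup_le ⟨0, by intro u w _; exact Nat.zero_le _⟩
  intro k hk
  exact le_trans (hk v v' hP.1) hle
end

section
/- For every finite connected graph G with at least two vertices, A(G) ≤ Dim(G), where A(G) is the minimum length of a maximal geodesic of G. -/
/-- `p` is a maximal geodesic: a shortest path not contained in a longer one,
i.e. not extendable to a longer geodesic at either endpoint. -/
def IsMaxGeodesic {V : Type*} (G : SimpleGraph V) {u v : V} (p : G.Walk u v) : Prop :=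
  p.length = G.dist u v ∧
    (¬ ∃ x : V, G.Adj x u ∧ G.dist x v = p.length + 1) ∧
    (¬ ∃ y : V, G.Adj v y ∧ G.dist u y = p.length + 1)

/-- `A(G)`: the minimum length of a maximal geodesic in `G`. -/
noncomputable def AG {V : Type*} (G : SimpleGraph V) : ℕ :=
  sInf {n | ∃ (u v : V) (p : G.Walk u v), IsMaxGeodesic G p ∧ p.length = n}

namespace SimpleGraph

variable {V : Type*} {G : SimpleGraph V}

namespace Walk

lemma dist_getVert_le {u v : V} (p : G.Walk u v) {i j : ℕ} (hij : i ≤ j) :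
    G.dist (p.getVert i) (p.getVert j) ≤ j - i := by
  have h := dist_le ((p.drop i).take (j - i))
  simp only [take_length, drop_getVert, Nat.add_sub_cancel' hij] at h
  omega

lemma dist_getVert_of_length_eq_dist {u v : V} (p : G.Walk u v) (hp : p.length = G.dist u v)
    {i j : ℕ} (hij : i ≤ j) (hj : j ≤ p.length) :
    G.dist (p.getVert i) (p.getVert j) = j - i := by
  refine le_antisymm (p.dist_getVert_le hij) ?_
  have hui := p.dist_getVert_le (Nat.zero_le i)
  have hjv := p.dist_getVert_le hj
  rw [getVert_zero] at hui
  rw [getVert_length] at hjv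
  have h₁ := (p.take i).reachable.dist_triangle_left v
  have h₂ := ((p.drop i).take (j - i)).reachable.dist_triangle_left v
  simp only [drop_getVert, Nat.add_sub_cancel' hij] at h₂
  omega

lemma natCast_dist_getVert_of_length_eq_dist {u v : V} (p : G.Walk u v)
    (hp : p.length = G.dist u v) {i j : ℕ} (hi : i ≤ p.length) (hj : j ≤ p.length) :
    (G.dist (p.getVert i) (p.getVert j) : ℤ) = |(i : ℤ) - j| := by
  rcases le_total i j with hij | hji
  · rw [p.dist_getVert_of_length_eq_dist hp hij hj, abs_sub_comm, abs_of_nonneg (by omega)]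
    omega
  · rw [dist_comm, p.dist_getVert_of_length_eq_dist hp hji hi, abs_of_nonneg (by omega)]
    omega

lemma length_le_ncard_distinguishers [Finite V] {u v : V} (p : G.Walk u v)
    (hp : p.length = G.dist u v) {i j : ℕ} (hi : i ≤ p.length) (hj : j ≤ p.length)
    (hij : i ≠ j) : p.length ≤ (distinguishers G (p.getVert i) (p.getVert j)).ncard := by
  classical
  have hdist {x y : ℕ} (hx : x ≤ p.length) (hy : y ≤ p.length) :=
    p.natCast_dist_getVert_of_length_eq_dist hp hx hy
  set T := (Finset.range (p.length + 1)).erase ((i + j) / 2)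
  have hT : T.card = p.length := by
    rw [Finset.card_erase_of_mem (Finset.mem_range.mpr (by omega)), Finset.card_range, Nat.add_sub_cancel]
  have hinj : Set.InjOn p.getVert T := by
    intro x hx y hy hxy
    simp only [T, Finset.coe_erase, Finset.coe_range, Set.mem_sdiff, Set.mem_Iio] at hx hy
    have hd := hdist (x := x) (y := y) (by omega) (by omega)
    rw [hxy, dist_self, Nat.cast_zero, eq_comm, abs_eq_zero, sub_eq_zero] at hd
    exact_mod_cast hd
  have hsub : (T.image p.getVert : Set V) ⊆ distinguishers G (p.getVert i) (p.getVert j) := by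
    intro w hw
    simp only [Finset.coe_image, Set.mem_image, T, Finset.coe_erase, Finset.coe_range,
      Set.mem_sdiff, Set.mem_Iio, Set.mem_singleton_iff] at hw
    obtain ⟨x, ⟨hx, hxm⟩, rfl⟩ := hw
    have hx' : x ≤ p.length := by omega
    intro h
    have hd := congrArg (fun n : ℕ => (n : ℤ)) h
    simp only [hdist hi hx', hdist hj hx'] at hd
    rcases abs_eq_abs.mp hd with h' | h' <;> omega
  calc p.length = (T.image p.getVert).card := by rw [Finset.card_image_of_injOn hinj, hT]
    _ = (T.image p.getVert : Set V).ncard := (Set.ncard_coe_finset _).symm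
    _ ≤ _ := Set.ncard_le_ncard hsub (Set.toFinite _)

end Walk

lemma Connected.exists_walk_getVert_eq (hG : G.Connected) {a b u v : V}
    (h : G.dist a b = G.dist a u + G.dist u v + G.dist v b) :
    ∃ p : G.Walk a b, p.length = G.dist a b ∧ p.getVert (G.dist a u) = u ∧
      p.getVert (G.dist a u + G.dist u v) = v := by
  obtain ⟨p₁, hp₁⟩ := hG.exists_walk_length_eq_dist a u
  obtain ⟨p₂, hp₂⟩ := hG.exists_walk_length_eq_dist u v
  obtain ⟨p₃, hp₃⟩ := hG.exists_walk_length_eq_dist v b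
  refine ⟨p₁.append (p₂.append p₃), ?_, ?_, ?_⟩
  · simp only [Walk.length_append]
    omega
  · simp [Walk.getVert_append, hp₁]
  · simp [Walk.getVert_append, hp₁, hp₂]

lemma Connected.exists_isMaxGeodesic_getVert_eq [Finite V] (hG : G.Connected) (u v : V) :
    ∃ (a b : V) (p : G.Walk a b) (i j : ℕ), IsMaxGeodesic G p ∧ i ≤ p.length ∧
      j ≤ p.length ∧ p.getVert i = u ∧ p.getVert j = v := by
  obtain ⟨⟨a, b⟩, hab, hmax⟩ := Set.exists_max_image
    {x : V × V | G.dist x.1 x.2 = G.dist x.1 u + G.dist u v + G.dist v x.2}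
    (fun x => G.dist x.1 x.2) (Set.toFinite _) ⟨(u, v), by simp⟩
  replace hab : G.dist a b = G.dist a u + G.dist u v + G.dist v b := hab
  have hmax' {x y : V} (h : G.dist x y = G.dist x u + G.dist u v + G.dist v y) :
      G.dist x y ≤ G.dist a b :=
    hmax (x, y) h
  obtain ⟨p, hp, hpu, hpv⟩ := hG.exists_walk_getVert_eq hab
  refine ⟨a, b, p, _, _, ⟨hp, ?_, ?_⟩, by omega, by omega, hpu, hpv⟩
  · rintro ⟨x, hxa, hxb⟩
    have h₀ : G.dist x a = 1 := dist_eq_one_iff_adj.mpr hxa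
    have h₁ : G.dist x u ≤ G.dist x a + G.dist a u := hG.dist_triangle
    have h₂ : G.dist x b ≤ G.dist x u + G.dist u b := hG.dist_triangle
    have h₃ : G.dist u b ≤ G.dist u v + G.dist v b := hG.dist_triangle
    have := hmax' (x := x) (y := b) (by omega)
    omega
  · rintro ⟨y, hby, hay⟩
    have h₀ : G.dist b y = 1 := dist_eq_one_iff_adj.mpr hby
    have h₁ : G.dist v y ≤ G.dist v b + G.dist b y := hG.dist_triangle
    have h₂ : G.dist a y ≤ G.dist a v + G.dist v y := hG.dist_triangle
    have h₃ : G.dist a v ≤ G.dist a u + G.dist u v := hG.dist_triangle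
    have := hmax' (x := a) (y := y) (by omega)
    omega

lemma AG_le_length {a b : V} {p : G.Walk a b} (hp : IsMaxGeodesic G p) : AG G ≤ p.length :=
  Nat.sInf_le ⟨a, b, p, hp, rfl⟩

lemma AG_le_ncard_distinguishers [Finite V] (hG : G.Connected) {u v : V} (huv : u ≠ v) :
    AG G ≤ (distinguishers G u v).ncard := by
  obtain ⟨a, b, p, i, j, hp, hi, hj, rfl, rfl⟩ := hG.exists_isMaxGeodesic_getVert_eq u v
  exact (AG_le_length hp).trans
    (p.length_le_ncard_distinguishers hp.1 hi hj (fun h => huv (h ▸ rfl)))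

end SimpleGraph

theorem stmt8 {V : Type*} [Fintype V] (G : SimpleGraph V) (hG : G.Connected)
    (hV : 1 < Fintype.card V) :
    AG G ≤ metricDim G := by
  obtain ⟨u₀, v₀, huv₀⟩ := Fintype.exists_pair_of_one_lt_card hV
  have hbdd : BddAbove {k | ∀ u v : V, u ≠ v → k ≤ (distinguishers G u v).ncard} :=
    ⟨Fintype.card V, fun k hk => (hk u₀ v₀ huv₀).trans <| by
      simpa [Set.ncard_univ] using Set.ncard_le_ncard (Set.subset_univ (distinguishers G u₀ v₀))⟩
  exact le_csSup hbdd fun u v huv => SimpleGraph.AG_le_ncard_distinguishers hG huv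
end

section
/- If a connected graph G is a V-graph, i.e., G has an exterior major vertex w with exactly two terminal vertices, both at distance 1 from w, then Dim(G) = 2. -/
open SimpleGraph in
lemma leaf_dist_aux {V : Type*} (G : SimpleGraph V) (hG : G.Connected) {u w x : V}
    (hn : G.neighborSet u = {w}) (hx : x ≠ u) : G.dist u x = G.dist w x + 1 := by
  have huw : G.Adj u w := by
    have : w ∈ G.neighborSet u := by rw [hn]; rfl
    exact this
  have h1 : G.dist u x ≤ G.dist w x + 1 := by
    have := hG.dist_triangle (u := u) (v := w) (w := x)
    have hd1 : G.dist u w = 1 := SimpleGraph.dist_eq_one_iff_adj.mpr huw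
    omega
  have h2 : G.dist w x + 1 ≤ G.dist u x := by
    obtain ⟨p, hp⟩ := (hG u x).exists_walk_length_eq_dist
    cases p with
    | nil => exact absurd rfl hx
    | @cons _ y _ hadj q =>
      have hyw : y = w := by
        have : y ∈ G.neighborSet u := hadj
        rw [hn] at this; exact this
      subst hyw
      have := SimpleGraph.dist_le q
      simp [SimpleGraph.Walk.length_cons] at hp
      omega
  omega

lemma leaf_neighborSet {V : Type*} (G : SimpleGraph V) {u w : V}
    (hd : (G.neighborSet u).ncard = 1) (hadj : G.Adj u w) : G.neighborSet u = {w} := by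
  obtain ⟨a, ha⟩ := Set.ncard_eq_one.mp hd
  have : w ∈ G.neighborSet u := hadj
  rw [ha] at this
  rw [ha, this]

theorem stmt9 {V : Type*} [Fintype V] (G : SimpleGraph V) (hG : G.Connected)
    (h : IsVGraph G) :
    metricDim G = 2 := by
  obtain ⟨w, hw, hcard, hadj⟩ := h
  obtain ⟨u₁, u₂, hne, hset⟩ := Set.ncard_eq_two.mp hcard
  have ht1 : IsTerminalOf G u₁ w := by
    have : u₁ ∈ {u | IsTerminalOf G u w} := by rw [hset]; left; rfl
    exact this
  have ht2 : IsTerminalOf G u₂ w := by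
    have : u₂ ∈ {u | IsTerminalOf G u w} := by rw [hset]; right; rfl
    exact this
  have ha1 : G.Adj u₁ w := hadj _ ht1
  have ha2 : G.Adj u₂ w := hadj _ ht2
  have hn1 : G.neighborSet u₁ = {w} := leaf_neighborSet G ht1.1 ha1
  have hn2 : G.neighborSet u₂ = {w} := leaf_neighborSet G ht2.1 ha2
  -- distinguishers of u₁ u₂ ⊆ {u₁, u₂}
  have hsub : distinguishers G u₁ u₂ ⊆ {u₁, u₂} := by
    intro x hx
    by_contra hmem
    simp only [Set.mem_insert_iff, Set.mem_singleton_iff, not_or] at hmem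
    have e1 := leaf_dist_aux G hG hn1 hmem.1
    have e2 := leaf_dist_aux G hG hn2 hmem.2
    have hxd : G.dist u₁ x ≠ G.dist u₂ x := hx
    rw [e1, e2] at hxd
    exact hxd rfl
  have hcard2 : (distinguishers G u₁ u₂).ncard ≤ 2 := by
    calc (distinguishers G u₁ u₂).ncard ≤ ({u₁, u₂} : Set V).ncard :=
          Set.ncard_le_ncard hsub (Set.toFinite _)
      _ ≤ 2 := (Set.ncard_pair hne).le
  -- every pair has ≥ 2 distinguishers
  have h2mem : ∀ u v : V, u ≠ v → 2 ≤ (distinguishers G u v).ncard := by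
    intro u v huv
    have hu : u ∈ distinguishers G u v := by
      show G.dist u u ≠ G.dist v u
      rw [SimpleGraph.dist_self]
      exact (hG.pos_dist_of_ne huv.symm).ne
    have hv : v ∈ distinguishers G u v := by
      show G.dist u v ≠ G.dist v v
      rw [SimpleGraph.dist_self]
      exact (hG.pos_dist_of_ne huv).ne'
    calc 2 = ({u, v} : Set V).ncard := (Set.ncard_pair huv).symm
      _ ≤ (distinguishers G u v).ncard := by
          apply Set.ncard_le_ncard _ (Set.toFinite _)
          intro x hx
          rcases hx with rfl | rfl
          · exact hu
          · exact hv
  have hseteq : {k | ∀ u v : V, u ≠ v → k ≤ (distinguishers G u v).ncard} = Set.Iic 2 := by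
    ext k
    constructor
    · intro hk
      exact le_trans (hk u₁ u₂ hne) hcard2
    · intro hk u v huv
      exact le_trans hk (h2mem u v huv)
  rw [metricDim, hseteq, csSup_Iic]
end

section
/- In a block graph, between any two vertices there is a unique geodesic (shortest path). -/
/-! Two distinct geodesics `p ≠ q` from `u` to `v` contain subpaths `p'`, `q'` between common
vertices `u'`, `v'` that close up into a cycle `p' ++ q'⁻¹`. Deleting one vertex of a cycle leaves
a path, so the vertex set of a cycle is 2-connected, and in a block graph it is a clique; hence
`u'` and `v'` are adjacent. But subpaths of geodesics are geodesics, so the cycle would have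
length `2 · dist u' v' = 2 < 3`. -/

namespace SimpleGraph

variable {V : Type*} {G : SimpleGraph V}

namespace Walk

lemma IsSubwalk.length_eq_dist {u v u' v' : V} {p : G.Walk u v} {p' : G.Walk u' v'}
    (h : p'.IsSubwalk p) (hp : p.length = G.dist u v) : p'.length = G.dist u' v' := by
  obtain ⟨ru, rv, rfl⟩ := h
  have h₁ : G.dist u v ≤ G.dist u u' + G.dist u' v := ru.reachable.dist_triangle_left v
  have h₂ : G.dist u' v ≤ G.dist u' v' + G.dist v' v := p'.reachable.dist_triangle_left v
  have hru := dist_le ru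
  have hrv := dist_le rv
  have hp' := dist_le p'
  simp only [length_append] at hp
  omega

lemma IsPath.connected_induce_support_diff_start {a b : V} {p : G.Walk a b} (hp : p.IsPath)
    (hab : a ≠ b) : (G.induce ({z | z ∈ p.support} \ {a})).Connected := by
  have hnil : ¬p.Nil := fun h => hab h.eq
  have hstart : a ∉ p.support.tail := by
    have := hp.support_nodup
    rw [← cons_tail_support] at this
    exact (List.nodup_cons.mp this).1
  have hset : {z | z ∈ p.support} \ {a} = {z | z ∈ p.tail.support} := by
    ext z
    rw [support_tail_of_not_nil p hnil, Set.mem_sdiff, Set.mem_ofPred_eq, Set.mem_ofPred_eq,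
      Set.mem_singleton_iff, mem_support_iff]
    constructor
    · rintro ⟨rfl | hz, hza⟩
      exacts [absurd rfl hza, hz]
    · exact fun hz => ⟨Or.inr hz, by rintro rfl; exact hstart hz⟩
  rw [hset]
  exact p.tail.connected_induce_support

lemma IsCycle.mem_support_iff_mem_tail_support {u z : V} {c : G.Walk u u} (hc : c.IsCycle) :
    z ∈ c.support ↔ z ∈ c.support.tail := by
  rw [mem_support_iff]
  refine ⟨?_, Or.inr⟩
  rintro (rfl | hz)
  exacts [end_mem_tail_support hc.not_nil, hz]

lemma IsCycle.ncard_support {u : V} {c : G.Walk u u} (hc : c.IsCycle) :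
    {z | z ∈ c.support}.ncard = c.length := by
  classical
  have hset : {z | z ∈ c.support} = (c.support.tail.toFinset : Set V) := by
    ext z
    rw [List.coe_toFinset, Set.mem_ofPred_eq, Set.mem_ofPred_eq,
      hc.mem_support_iff_mem_tail_support]
  rw [hset, Set.ncard_coe_finset, List.toFinset_card_of_nodup hc.support_nodup,
    List.length_tail, length_support, Nat.add_sub_cancel]

lemma IsCycle.connected_induce_support_diff {u x : V} {c : G.Walk u u} (hc : c.IsCycle)
    (hx : x ∈ c.support) : (G.induce ({z | z ∈ c.support} \ {x})).Connected := by
  classical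
  have hrot : {z | z ∈ (c.rotate x hx).support} = {z | z ∈ c.support} := by
    ext z
    exact mem_support_rotate_iff c x hx
  rw [← hrot]
  set d := c.rotate x hx
  have hd : d.IsCycle := hc.rotate hx
  -- `d.tail` is a path ending at `x` through every other vertex of the cycle
  have hset : {z | z ∈ d.support} \ {x} = {z | z ∈ d.tail.reverse.support} \ {x} := by
    ext z
    simp only [Set.mem_sdiff, Set.mem_ofPred_eq, support_reverse, List.mem_reverse,
      support_tail_of_not_nil d hd.not_nil, hd.mem_support_iff_mem_tail_support]
  rw [hset]
  exact hd.isPath_tail.reverse.connected_induce_support_diff_start (adj_snd hd.not_nil).ne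

end Walk

end SimpleGraph

open SimpleGraph Walk

lemma IsBlockGraph.isClique_support_of_isCycle {V : Type*} {G : SimpleGraph V}
    (hG : IsBlockGraph G) {u : V} {c : G.Walk u u} (hc : c.IsCycle) :
    G.IsClique {z | z ∈ c.support} :=
  hG.2 _ (hc.ncard_support ▸ hc.three_le_length) c.connected_induce_support
    fun _ hx => hc.connected_induce_support_diff hx

theorem stmt11 {V : Type*} (G : SimpleGraph V) (hG : IsBlockGraph G)
    (u v : V) (p q : G.Walk u v) (hp : p.IsPath) (hq : q.IsPath)
    (hpl : p.length = G.dist u v) (hql : q.length = G.dist u v) :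
    p = q := by
  by_contra hne
  obtain ⟨u', v', p', q', hp', hq', hc⟩ := hp.exists_isCycle_of_ne hq hne
  have hlen : 3 ≤ 2 * G.dist u' v' := by
    have := hc.three_le_length
    rw [length_append, length_reverse, hp'.length_eq_dist hpl, hq'.length_eq_dist hql] at this
    omega
  have huv' : u' ≠ v' := by
    rintro rfl
    simp at hlen
  have hadj : G.Adj u' v' :=
    hG.isClique_support_of_isCycle hc (start_mem_support _) (by simp) huv'
  rw [dist_eq_one_iff_adj.mpr hadj] at hlen
  omega
end

section
/- If G is a block graph that is tagged (has a maximal complete subgraph K_r, r ≥ 3, containing two vertices u, v with deg(u) = deg(v) = r − 1), then there exist two distinct vertices u, v such that the set of vertices distinguishing u and v is exactly {u, v}; in particular Dim(G) = 2. -/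
/-! Two vertices of a maximal clique whose only neighbours lie in that clique are twins:
they have the same neighbours apart from each other. Twins are at the same distance from
every other vertex, so only the two of them distinguish the pair, while in a connected
graph every pair is distinguished at least by itself. -/

open SimpleGraph

def AreTwins {V : Type*} (G : SimpleGraph V) (u v : V) : Prop :=
  ∀ w, w ≠ u → w ≠ v → (G.Adj u w ↔ G.Adj v w)

lemma AreTwins.symm {V : Type*} {G : SimpleGraph V} {u v : V} (h : AreTwins G u v) :
    AreTwins G v u :=
  fun w hwv hwu => (h w hwu hwv).symm

section Distinguishers

variable {V : Type*} {G : SimpleGraph V} {u v : V}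

lemma AreTwins.dist_le (hc : G.Connected) (htwin : AreTwins G u v) {w : V}
    (hwu : w ≠ u) (hwv : w ≠ v) : G.dist v w ≤ G.dist u w := by
  -- the first step of a geodesic from `u` to `w` is `v` itself or a neighbour of `v`
  obtain ⟨p, hp⟩ := hc.exists_walk_length_eq_dist u w
  cases p with
  | nil => exact absurd rfl hwu
  | @cons _ x _ hux q =>
    rw [Walk.length_cons] at hp
    by_cases hxv : x = v
    · subst hxv
      exact (SimpleGraph.dist_le q).trans (hp ▸ Nat.le_succ _)
    · have hvx : G.Adj v x := (htwin x (G.ne_of_adj hux).symm hxv).mp hux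
      calc G.dist v w ≤ G.dist v x + G.dist x w := hc.dist_triangle
        _ ≤ 1 + q.length :=
          Nat.add_le_add (SimpleGraph.dist_le hvx.toWalk) (SimpleGraph.dist_le q)
        _ = G.dist u w := by omega

lemma AreTwins.dist_eq (hc : G.Connected) (htwin : AreTwins G u v) {w : V}
    (hwu : w ≠ u) (hwv : w ≠ v) : G.dist u w = G.dist v w :=
  le_antisymm (htwin.symm.dist_le hc hwv hwu) (htwin.dist_le hc hwu hwv)

lemma pair_subset_distinguishers (h : G.Reachable u v) (huv : u ≠ v) :
    {u, v} ⊆ distinguishers G u v := by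
  rintro w (rfl | rfl) <;> simp only [distinguishers, Set.mem_ofPred_eq, dist_self]
  · exact fun h0 => huv (h.symm.dist_eq_zero_iff.mp h0.symm).symm
  · exact fun h0 => huv (h.dist_eq_zero_iff.mp h0)

lemma AreTwins.distinguishers_eq_pair (hc : G.Connected) (huv : u ≠ v)
    (htwin : AreTwins G u v) : distinguishers G u v = {u, v} := by
  refine subset_antisymm (fun w hw => ?_) (pair_subset_distinguishers (hc u v) huv)
  by_contra hne
  simp only [Set.mem_insert_iff, Set.mem_singleton_iff, not_or] at hne
  exact hw (htwin.dist_eq hc hne.1 hne.2)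

lemma two_le_ncard_distinguishers [Finite V] (hc : G.Connected) (huv : u ≠ v) :
    2 ≤ (distinguishers G u v).ncard :=
  calc 2 = ({u, v} : Set V).ncard := (Set.ncard_pair huv).symm
    _ ≤ (distinguishers G u v).ncard :=
      Set.ncard_le_ncard (pair_subset_distinguishers (hc u v) huv) (Set.toFinite _)

lemma metricDim_eq_two [Finite V] (hc : G.Connected) (huv : u ≠ v)
    (hpair : distinguishers G u v = {u, v}) : metricDim G = 2 := by
  set S := {k | ∀ a b : V, a ≠ b → k ≤ (distinguishers G a b).ncard}
  have htwo : 2 ∈ S := fun a b hab => two_le_ncard_distinguishers hc hab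
  have hle : ∀ k ∈ S, k ≤ 2 := fun k hk => by
    simpa only [hpair, Set.ncard_pair huv] using hk u v huv
  exact le_antisymm (csSup_le ⟨2, htwo⟩ hle) (le_csSup ⟨2, hle⟩ htwo)

end Distinguishers

lemma neighborSet_eq_diff_of_ndeg {V : Type*} [Finite V] {G : SimpleGraph V} {K : Set V}
    (hK : G.IsClique K) {u : V} (hu : u ∈ K) (hdeg : ndeg G u = K.ncard - 1) :
    G.neighborSet u = K \ {u} := by
  refine (Set.eq_of_subset_of_ncard_le (fun x hx => (hK hx.1 hu hx.2).symm) ?_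
    (Set.toFinite _)).symm
  rw [Set.ncard_sdiff_singleton_of_mem hu]
  exact hdeg.le

lemma Tagged.exists_twins {V : Type*} [Finite V] {G : SimpleGraph V} (ht : Tagged G) :
    ∃ u v : V, u ≠ v ∧ AreTwins G u v := by
  obtain ⟨K, hK, -, -, u, hu, v, hv, huv, hdu, hdv⟩ := ht
  refine ⟨u, v, huv, fun w hwu hwv => ?_⟩
  rw [← mem_neighborSet, ← mem_neighborSet, neighborSet_eq_diff_of_ndeg hK hu hdu,
    neighborSet_eq_diff_of_ndeg hK hv hdv]
  simp [hwu, hwv]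

theorem stmt13 {V : Type*} [Fintype V] (G : SimpleGraph V)
    (hG : IsBlockGraph G) (ht : Tagged G) :
    (∃ u v : V, u ≠ v ∧ distinguishers G u v = {u, v}) ∧ metricDim G = 2 := by
  obtain ⟨u, v, huv, htwin⟩ := ht.exists_twins
  have hpair := htwin.distinguishers_eq_pair hG.1 huv
  exact ⟨⟨u, v, huv, hpair⟩, metricDim_eq_two hG.1 huv hpair⟩
end

section
/- An infinite tree T is k-metric dimensional for some finite k if and only if there exists a vertex w ∈ T such that T \ {w} has at least two finite connected components. -/
section AuxTree

open SimpleGraph Walk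

variable {V : Type*} {T : SimpleGraph V}

private lemma splitWalk {u v : V} (p : T.Walk u v) :
    ∀ i, i ≤ p.length → ∃ (m : V) (p1 : T.Walk u m) (p2 : T.Walk m v),
      p1.length = i ∧ p1.length + p2.length = p.length ∧ p1.append p2 = p := by
  induction p with
  | nil =>
    intro i hi
    simp only [Walk.length_nil, Nat.le_zero] at hi
    subst hi
    exact ⟨_, .nil, .nil, rfl, rfl, rfl⟩
  | cons h q ih =>
    intro i hi
    match i with
    | 0 => exact ⟨_, .nil, .cons h q, rfl, by simp, by simp⟩
    | (i+1) =>
      obtain ⟨m, p1, p2, h1, h2, h3⟩ := ih i (by simp only [Walk.length_cons] at hi; omega)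
      refine ⟨m, .cons h p1, p2, by simp [h1], by simp only [Walk.length_cons]; omega, ?_⟩
      rw [Walk.cons_append, h3]

private lemma dist_add_of_mem (hc : T.Connected) {u v a : V} {p : T.Walk u v}
    (hp : p.length = T.dist u v) (ha : a ∈ p.support) :
    T.dist u a + T.dist a v = T.dist u v := by
  classical
  have h1 := SimpleGraph.dist_le (p.takeUntil a ha)
  have h2 := SimpleGraph.dist_le (p.dropUntil a ha)
  have h3 : (p.takeUntil a ha).length + (p.dropUntil a ha).length = p.length := by
    rw [← Walk.length_append, Walk.take_spec]
  have h4 := hc.dist_triangle (u := u) (v := a) (w := v)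
  omega

private lemma paths_eq (hT : T.IsTree) {u v : V} {p q : T.Walk u v}
    (hp : p.IsPath) (hq : q.IsPath) : p = q := by
  have := hT.IsAcyclic.path_unique ⟨p, hp⟩ ⟨q, hq⟩
  exact congrArg Subtype.val this

private lemma path_length (hT : T.IsTree) {u v : V} {p : T.Walk u v} (hp : p.IsPath) :
    p.length = T.dist u v := by
  obtain ⟨q, hq, hql⟩ := hT.isConnected.exists_path_of_dist u v
  rw [paths_eq hT hp hq, hql]

private lemma forced_mem (hT : T.IsTree) {u v a : V} {p : T.Walk u v} (hp : p.IsPath)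
    (ha : a ∈ p.support) (q : T.Walk u v) : a ∈ q.support := by
  classical
  have hb : q.bypass = p := paths_eq hT q.bypass_isPath hp
  exact q.support_bypass_subset (hb ▸ ha)

private lemma adj_dist_cases (hT : T.IsTree) {a b : V} (h : T.Adj a b) (v : V) :
    T.dist a v = T.dist b v + 1 ∨ T.dist b v = T.dist a v + 1 := by
  obtain ⟨p, hp, hl⟩ := hT.isConnected.exists_path_of_dist a v
  by_cases hb : b ∈ p.support
  · have e1 := dist_add_of_mem hT.isConnected hl hb
    have e2 : T.dist a b = 1 := SimpleGraph.dist_eq_one_iff_adj.mpr h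
    left; omega
  · right
    have hp' : (Walk.cons h.symm p).IsPath := hp.cons hb
    have hlen := path_length hT hp'
    simp only [Walk.length_cons, hl] at hlen
    omega

private lemma walk_parity (hT : T.IsTree) : ∀ {a b : V} (p : T.Walk a b),
    p.length % 2 = T.dist a b % 2 := by
  intro a b p
  induction p with
  | nil => simp [SimpleGraph.dist_self]
  | @cons a c b h q ih =>
    rcases adj_dist_cases hT h b with h' | h' <;>
      · simp only [Walk.length_cons]; omega

private lemma dist_parity (hT : T.IsTree) (u v x : V) :
    (T.dist u x + T.dist x v) % 2 = T.dist u v % 2 := by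
  obtain ⟨p, hp⟩ := hT.isConnected.exists_walk_length_eq_dist u x
  obtain ⟨q, hq⟩ := hT.isConnected.exists_walk_length_eq_dist x v
  have := walk_parity hT (p.append q)
  rwa [Walk.length_append, hp, hq] at this

private lemma append_path {u w x : V} {p : T.Walk u w} {q : T.Walk w x}
    (hp : p.IsPath) (hq : q.IsPath)
    (h : ∀ a ∈ p.support, a ∈ q.support → a = w) : (p.append q).IsPath := by
  rw [Walk.isPath_def, Walk.support_append]
  have hndq : q.support.Nodup := hq.support_nodup
  have hq' : (w :: q.support.tail).Nodup := by rw [← q.support_eq_cons]; exact hndq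
  refine List.Nodup.append hp.support_nodup (List.nodup_cons.mp hq').2 ?_
  intro a hap haq
  have haq' : a ∈ q.support := by
    rw [q.support_eq_cons]; exact List.mem_cons_of_mem _ haq
  have haw : a = w := h a hap haq'
  subst haw
  exact (List.nodup_cons.mp hq').1 haq

private lemma avoid_of_reach {w : V} {a b : ↥{x : V | x ≠ w}}
    (h : (T.induce {x | x ≠ w}).Reachable a b) : ∃ p : T.Walk ↑a ↑b, w ∉ p.support := by
  obtain ⟨q⟩ := h
  refine ⟨q.map ⟨Subtype.val, fun h => h⟩, ?_⟩
  rw [Walk.support_map]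
  intro hw
  obtain ⟨y, hy, hyw⟩ := List.mem_map.mp hw
  exact y.2 hyw

private lemma reach_of_avoid {w : V} : ∀ {a b : V} (p : T.Walk a b), w ∉ p.support →
    ∀ (ha : a ≠ w) (hb : b ≠ w),
      (T.induce {x : V | x ≠ w}).Reachable ⟨a, ha⟩ ⟨b, hb⟩ := by
  intro a b p
  induction p with
  | nil => intro _ ha hb; exact Reachable.refl _
  | @cons a c b h q ih =>
    intro hsup ha hb
    have hcmem : c ∈ (Walk.cons h q).support := by
      rw [Walk.support_cons]; exact List.mem_cons_of_mem _ q.start_mem_support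
    have hc : c ≠ w := fun hcw => hsup (hcw ▸ hcmem)
    have hqs : w ∉ q.support := fun hw => hsup (by
      rw [Walk.support_cons]; exact List.mem_cons_of_mem _ hw)
    exact (SimpleGraph.Adj.reachable
      (show (T.induce {x : V | x ≠ w}).Adj ⟨a, ha⟩ ⟨c, hc⟩ from h)).trans (ih hqs hc hb)

private lemma forced_dist (hc : T.Connected) {u x a : V}
    (hforce : ∀ p : T.Walk u x, a ∈ p.support) :
    T.dist u a + T.dist a x = T.dist u x := by
  obtain ⟨p, hp⟩ := hc.exists_walk_length_eq_dist u x
  exact dist_add_of_mem hc hp (hforce p)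

private lemma forced_trans {u v w x : V} (hforced : ∀ s : T.Walk u v, w ∈ s.support)
    {q : T.Walk x u} (hq : w ∉ q.support) : ∀ s : T.Walk v x, w ∈ s.support := by
  intro s
  by_contra hw
  have := hforced (s.append q).reverse
  rw [Walk.support_reverse, List.mem_reverse, Walk.mem_support_append_iff] at this
  rcases this with h | h
  exacts [hw h, hq h]

private lemma key_lt (hT : T.IsTree) {u v w x : V} {r : ℕ} (hr : 1 ≤ r)
    (huw : T.dist u w = r) (hvw : T.dist v w = r)
    (hforced : ∀ s : T.Walk v x, w ∈ s.support)
    (hq : ∃ q : T.Walk u x, w ∉ q.support) : T.dist u x < T.dist v x := by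
  classical
  have hc := hT.isConnected
  have hvx : T.dist v w + T.dist w x = T.dist v x := forced_dist hc hforced
  obtain ⟨A, hA, hAl⟩ := hc.exists_path_of_dist u w
  obtain ⟨B, hB, hBl⟩ := hc.exists_path_of_dist w x
  by_cases hshare : ∃ a, a ∈ A.support ∧ a ∈ B.support ∧ a ≠ w
  · obtain ⟨a, haA, haB, haw⟩ := hshare
    have e1 : T.dist u a + T.dist a w = T.dist u w := dist_add_of_mem hc hAl haA
    have e2 : T.dist w a + T.dist a x = T.dist w x := dist_add_of_mem hc hBl haB
    have e3 : T.dist u x ≤ T.dist u a + T.dist a x := hc.dist_triangle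
    have e4 : 0 < T.dist a w := hc.pos_dist_of_ne haw
    have e5 : T.dist w a = T.dist a w := SimpleGraph.dist_comm
    omega
  · exfalso
    push_neg at hshare
    have hP : (A.append B).IsPath := append_path hA hB hshare
    obtain ⟨q, hq⟩ := hq
    have hbp : q.bypass = A.append B := paths_eq hT q.bypass_isPath hP
    have hwmem : w ∈ (A.append B).support := by
      rw [Walk.mem_support_append_iff]; exact Or.inl A.end_mem_support
    exact hq (q.support_bypass_subset (hbp ▸ hwmem))

private lemma exists_nbr :
    ∀ {c w : V} (_ : T.Walk c w), c ≠ w →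
      ∃ u, T.Adj u w ∧ ∃ q : T.Walk c u, w ∉ q.support := by
  intro c w p
  induction p with
  | nil => intro h; exact absurd rfl h
  | @cons c d w h q ih =>
    intro hc'
    by_cases hd : d = w
    · subst hd
      refine ⟨c, h, .nil, ?_⟩
      simp only [Walk.support_nil, List.mem_singleton]
      exact fun hh => hc' hh.symm
    · obtain ⟨u, hu, q', hq'⟩ := ih hd
      refine ⟨u, hu, .cons h q', ?_⟩
      rw [Walk.support_cons]
      intro hmem
      rcases List.mem_cons.mp hmem with h1 | h1
      exacts [hc' h1.symm, hq' h1]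

end AuxTree

theorem stmt14 {V : Type*} [Infinite V] (T : SimpleGraph V) (hT : T.IsTree) :
    (∃ k : ℕ, IsGreatest {k | ∀ u v : V, u ≠ v →
        ∃ F : Finset V, k ≤ F.card ∧ ∀ w ∈ F, T.dist u w ≠ T.dist v w} k) ↔
      ∃ w : V, ∃ C₁ C₂ : (T.induce {x | x ≠ w}).ConnectedComponent,
        C₁ ≠ C₂ ∧ C₁.supp.Finite ∧ C₂.supp.Finite :=  by
  have hc := hT.isConnected
  constructor
  · rintro ⟨k, hk, hub⟩
    have hk1 : k + 1 ∉ {k | ∀ u v : V, u ≠ v →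
        ∃ F : Finset V, k ≤ F.card ∧ ∀ w ∈ F, T.dist u w ≠ T.dist v w} := fun h => by
      have := hub h; omega
    simp only [Set.mem_setOf_eq] at hk1
    push_neg at hk1
    obtain ⟨u, v, huv, hF⟩ := hk1
    have hDfin : {x | T.dist u x ≠ T.dist v x}.Finite := by
      by_contra hinf
      have hinf' : Set.Infinite {x | T.dist u x ≠ T.dist v x} := hinf
      obtain ⟨F, hFsub, hFcard⟩ := hinf'.exists_subset_card_eq (k + 1)
      obtain ⟨w, hwF, hw⟩ := hF F (by omega)
      exact (hFsub hwF) hw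
    have hpar : T.dist u v % 2 = 0 := by
      by_contra hodd
      have huniv : {x | T.dist u x ≠ T.dist v x} = Set.univ := by
        ext x
        simp only [Set.mem_univ, iff_true, Set.mem_setOf_eq]
        intro heq
        have hp := dist_parity hT u v x
        have hcomm : T.dist x v = T.dist v x := SimpleGraph.dist_comm
        omega
      exact Set.infinite_univ (huniv ▸ hDfin)
    obtain ⟨p, hp, hpl⟩ := hc.exists_path_of_dist u v
    have hdpos : 0 < T.dist u v := hc.pos_dist_of_ne huv
    have hr1 : 1 ≤ T.dist u v / 2 := by omega
    obtain ⟨w, p1, p2, h1, h2, h3⟩ := splitWalk p (T.dist u v / 2) (by rw [hpl]; omega)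
    have hd1 : T.dist u w ≤ T.dist u v / 2 := h1 ▸ SimpleGraph.dist_le p1
    have hd2 : T.dist w v ≤ T.dist u v / 2 := by
      have := SimpleGraph.dist_le p2; omega
    have htr : T.dist u v ≤ T.dist u w + T.dist w v := hc.dist_triangle
    have huwr : T.dist u w = T.dist u v / 2 := by omega
    have hwvr : T.dist w v = T.dist u v / 2 := by omega
    have hwsup : w ∈ p.support := by
      rw [← h3, SimpleGraph.Walk.mem_support_append_iff]; exact Or.inl p1.end_mem_support
    have hforced_uv : ∀ s : T.Walk u v, w ∈ s.support := forced_mem hT hp hwsup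
    have hforced_vu : ∀ s : T.Walk v u, w ∈ s.support := fun s => by
      have := hforced_uv s.reverse
      rwa [SimpleGraph.Walk.support_reverse, List.mem_reverse] at this
    have hUw : u ≠ w := by
      intro h; rw [← h, SimpleGraph.dist_self] at huwr; omega
    have hVw : v ≠ w := by
      intro h; rw [← h, SimpleGraph.dist_self (v := v)] at hwvr; omega
    refine ⟨w, (T.induce {x | x ≠ w}).connectedComponentMk ⟨u, hUw⟩,
      (T.induce {x | x ≠ w}).connectedComponentMk ⟨v, hVw⟩, ?_, ?_, ?_⟩
    · intro hCeq
      have hreach := (SimpleGraph.ConnectedComponent.eq).mp hCeq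
      obtain ⟨q, hq⟩ := avoid_of_reach hreach
      exact hq (hforced_uv q)
    · refine Set.Finite.subset (Set.Finite.preimage Subtype.val_injective.injOn hDfin) ?_
      rintro ⟨x, hx⟩ hmem
      rw [SimpleGraph.ConnectedComponent.mem_supp_iff] at hmem
      have hreach := (SimpleGraph.ConnectedComponent.eq).mp hmem
      obtain ⟨q, hq⟩ := avoid_of_reach hreach
      have hfvx : ∀ s : T.Walk v x, w ∈ s.support := forced_trans hforced_uv hq
      have hlt := key_lt hT hr1 huwr
        (by rw [SimpleGraph.dist_comm]; exact hwvr) hfvx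
        ⟨q.reverse, by rw [SimpleGraph.Walk.support_reverse, List.mem_reverse]; exact hq⟩
      exact ne_of_lt hlt
    · refine Set.Finite.subset (Set.Finite.preimage Subtype.val_injective.injOn hDfin) ?_
      rintro ⟨x, hx⟩ hmem
      rw [SimpleGraph.ConnectedComponent.mem_supp_iff] at hmem
      have hreach := (SimpleGraph.ConnectedComponent.eq).mp hmem
      obtain ⟨q, hq⟩ := avoid_of_reach hreach
      have hfux : ∀ s : T.Walk u x, w ∈ s.support := forced_trans hforced_vu hq
      have hlt := key_lt hT hr1 (by rw [SimpleGraph.dist_comm]; exact hwvr) huwr hfux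
        ⟨q.reverse, by rw [SimpleGraph.Walk.support_reverse, List.mem_reverse]; exact hq⟩
      exact (ne_of_lt hlt).symm
  · rintro ⟨w, C₁, C₂, hC, h1fin, h2fin⟩
    obtain ⟨c₁, hc₁⟩ := C₁.exists_rep
    obtain ⟨c₂, hc₂⟩ := C₂.exists_rep
    obtain ⟨pw1⟩ := hc.preconnected (↑c₁) w
    obtain ⟨pw2⟩ := hc.preconnected (↑c₂) w
    obtain ⟨u, hu_adj, qu, hqu⟩ := exists_nbr pw1 c₁.2
    obtain ⟨v, hv_adj, qv, hqv⟩ := exists_nbr pw2 c₂.2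
    have hu_ne : u ≠ w := hu_adj.ne
    have hv_ne : v ≠ w := hv_adj.ne
    have hu_mem : (T.induce {x | x ≠ w}).connectedComponentMk ⟨u, hu_ne⟩ = C₁ := by
      rw [← hc₁]
      exact SimpleGraph.ConnectedComponent.sound (reach_of_avoid qu hqu c₁.2 hu_ne).symm
    have hv_mem : (T.induce {x | x ≠ w}).connectedComponentMk ⟨v, hv_ne⟩ = C₂ := by
      rw [← hc₂]
      exact SimpleGraph.ConnectedComponent.sound (reach_of_avoid qv hqv c₂.2 hv_ne).symm
    have huv : u ≠ v := by
      intro h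
      apply hC
      rw [← hu_mem, ← hv_mem]
      congr 1
      exact Subtype.ext h
    have hdu : T.dist u w = 1 := SimpleGraph.dist_eq_one_iff_adj.mpr hu_adj
    have hdv : T.dist v w = 1 := SimpleGraph.dist_eq_one_iff_adj.mpr hv_adj
    have hDsub : {x | T.dist u x ≠ T.dist v x} ⊆
        (Subtype.val '' C₁.supp) ∪ (Subtype.val '' C₂.supp) := by
      intro x hxD
      by_contra hnot
      rw [Set.mem_union, not_or] at hnot
      have hxw : x ≠ w := by
        rintro rfl; exact hxD (hdu.trans hdv.symm)
      have hfu : ∀ s : T.Walk u x, w ∈ s.support := by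
        intro s; by_contra hws
        have hr := reach_of_avoid s hws hu_ne hxw
        exact hnot.1 ⟨⟨x, hxw⟩, by
          rw [SimpleGraph.ConnectedComponent.mem_supp_iff, ← hu_mem]
          exact SimpleGraph.ConnectedComponent.sound hr.symm, rfl⟩
      have hfv : ∀ s : T.Walk v x, w ∈ s.support := by
        intro s; by_contra hws
        have hr := reach_of_avoid s hws hv_ne hxw
        exact hnot.2 ⟨⟨x, hxw⟩, by
          rw [SimpleGraph.ConnectedComponent.mem_supp_iff, ← hv_mem]
          exact SimpleGraph.ConnectedComponent.sound hr.symm, rfl⟩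
      have e1 : T.dist u w + T.dist w x = T.dist u x := forced_dist hc hfu
      have e2 : T.dist v w + T.dist w x = T.dist v x := forced_dist hc hfv
      exact hxD (by omega)
    have hDfin : {x | T.dist u x ≠ T.dist v x}.Finite :=
      Set.Finite.subset ((h1fin.image _).union (h2fin.image _)) hDsub
    have h0 : (0 : ℕ) ∈ {k | ∀ u v : V, u ≠ v →
        ∃ F : Finset V, k ≤ F.card ∧ ∀ w ∈ F, T.dist u w ≠ T.dist v w} :=
      fun _ _ _ => ⟨∅, by simp⟩
    have hbdd : BddAbove {k | ∀ u v : V, u ≠ v →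
        ∃ F : Finset V, k ≤ F.card ∧ ∀ w ∈ F, T.dist u w ≠ T.dist v w} := by
      refine ⟨hDfin.toFinset.card, ?_⟩
      intro k hk
      obtain ⟨F, hF1, hF2⟩ := hk u v huv
      refine hF1.trans (Finset.card_le_card ?_)
      intro a ha
      rw [Set.Finite.mem_toFinset]
      exact hF2 a ha
    exact ⟨_, Nat.sSup_mem ⟨0, h0⟩ hbdd, fun b hb => le_csSup hbdd hb⟩
end
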